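/- Let F : ℝ^m → ℝ^n satisfy ∑_i F_i(x) = ∑_j x_j for all x, and suppose F is (Δ, ε)-monotone. Let a partition of the index sets into r regions be given, and define the aggregation query M̃(x) ∈ ℝ^{2r} whose first r coordinates are regional sums of F(x) and last r coordinates are regional sums of x. Then for all α, β ∈ ℝ^m with β ≤ α ≤ β + Δ·𝟙 differing in at most one coordinate, ‖M̃(α) - M̃(β)‖₁ ≤ 2Δ + 2ε. -/
import Mathlib

lemma partial_sums_l1 {N r : ℕ} (v : Fin N → ℝ) (ρ : Fin N → Fin r) :
    ∑ k : Fin r, |∑ i ∈ Finset.univ.filter (fun i => ρ i = k), v i| ≤ ∑ i : Fin N, |v i| := by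
  calc ∑ k : Fin r, |∑ i ∈ Finset.univ.filter (fun i => ρ i = k), v i|
      ≤ ∑ k : Fin r, ∑ i ∈ Finset.univ.filter (fun i => ρ i = k), |v i| := by
        exact Finset.sum_le_sum fun k _ => Finset.abs_sum_le_sum_abs _ _
    _ = ∑ i : Fin N, |v i| := Finset.sum_fiberwise _ _ _

/-- Sensitivity of the aggregation query: for a balance-preserving `(Δ, ε)`-monotone map and any
partition of generator and load indices into `r` regions, the aggregation query changes in
`ℓ¹` norm by at most `2Δ + 2ε` under an admissible single-coordinate load change. -/
theorem aggregation_query_sensitivity {m n r : ℕ} (F : (Fin m → ℝ) → (Fin n → ℝ))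
    (Δ ε : ℝ) (hΔ : 0 < Δ)
    (hbal : ∀ x : Fin m → ℝ, ∑ i : Fin n, F x i = ∑ j : Fin m, x j)
    (hmono : ∀ α β : Fin m → ℝ, β ≤ α → (∀ j : Fin m, α j ≤ β j + Δ) →
      (∃ u : Fin m, ∀ j : Fin m, j ≠ u → α j = β j) →
      -ε ≤ ∑ i : Fin n, min (F α i - F β i) 0)
    (ρg : Fin n → Fin r) (ρl : Fin m → Fin r) :
    ∀ α β : Fin m → ℝ, β ≤ α → (∀ j : Fin m, α j ≤ β j + Δ) →
      (∃ u : Fin m, ∀ j : Fin m, j ≠ u → α j = β j) →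
      (∑ k : Fin r, |(∑ i ∈ Finset.univ.filter (fun i => ρg i = k), F α i) -
          (∑ i ∈ Finset.univ.filter (fun i => ρg i = k), F β i)|) +
      (∑ k : Fin r, |(∑ j ∈ Finset.univ.filter (fun j => ρl j = k), α j) -
          (∑ j ∈ Finset.univ.filter (fun j => ρl j = k), β j)|) ≤ 2 * Δ + 2 * ε := by
  intro α β hle hub hone
  -- sum of load change is at most Δ and nonnegative
  obtain ⟨u, hu⟩ := hone
  have hsum_eq : ∑ j : Fin m, (α j - β j) = α u - β u := by
    apply Finset.sum_eq_single
    · intro j _ hj; rw [hu j hj]; ring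
    · intro h; exact absurd (Finset.mem_univ u) h
  have hΔsum : ∑ j : Fin m, (α j - β j) ≤ Δ := by
    rw [hsum_eq]; linarith [hub u]
  -- load term
  have hload : (∑ k : Fin r, |(∑ j ∈ Finset.univ.filter (fun j => ρl j = k), α j) -
      (∑ j ∈ Finset.univ.filter (fun j => ρl j = k), β j)|) ≤ Δ := by
    have h1 := partial_sums_l1 (fun j => α j - β j) ρl
    have h2 : ∑ j : Fin m, |α j - β j| = ∑ j : Fin m, (α j - β j) := by
      apply Finset.sum_congr rfl
      intro j _; exact abs_of_nonneg (by linarith [hle j])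
    calc (∑ k : Fin r, |(∑ j ∈ Finset.univ.filter (fun j => ρl j = k), α j) -
          (∑ j ∈ Finset.univ.filter (fun j => ρl j = k), β j)|)
        = ∑ k : Fin r, |∑ j ∈ Finset.univ.filter (fun j => ρl j = k), (α j - β j)| := by
          simp [Finset.sum_sub_distrib]
      _ ≤ ∑ j : Fin m, |α j - β j| := h1
      _ = ∑ j : Fin m, (α j - β j) := h2
      _ ≤ Δ := hΔsum
  -- generator term
  have hmin := hmono α β hle hub ⟨u, hu⟩
  have hdsum : ∑ i : Fin n, (F α i - F β i) = ∑ j : Fin m, (α j - β j) := by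
    rw [Finset.sum_sub_distrib, hbal α, hbal β, ← Finset.sum_sub_distrib]
  have habs : ∑ i : Fin n, |F α i - F β i|
      = ∑ i : Fin n, (F α i - F β i) - 2 * ∑ i : Fin n, min (F α i - F β i) 0 := by
    rw [Finset.mul_sum, ← Finset.sum_sub_distrib]
    apply Finset.sum_congr rfl
    intro i _
    rcases le_or_gt (F α i - F β i) 0 with h | h
    · rw [min_eq_left h, abs_of_nonpos h]; ring
    · rw [min_eq_right h.le, abs_of_pos h]; ring
  have hgen : (∑ k : Fin r, |(∑ i ∈ Finset.univ.filter (fun i => ρg i = k), F α i) -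
      (∑ i ∈ Finset.univ.filter (fun i => ρg i = k), F β i)|) ≤ Δ + 2 * ε := by
    calc (∑ k : Fin r, |(∑ i ∈ Finset.univ.filter (fun i => ρg i = k), F α i) -
          (∑ i ∈ Finset.univ.filter (fun i => ρg i = k), F β i)|)
        = ∑ k : Fin r, |∑ i ∈ Finset.univ.filter (fun i => ρg i = k), (F α i - F β i)| := by
          simp [Finset.sum_sub_distrib]
      _ ≤ ∑ i : Fin n, |F α i - F β i| := partial_sums_l1 (fun i => F α i - F β i) ρg
      _ = ∑ i : Fin n, (F α i - F β i) - 2 * ∑ i : Fin n, min (F α i - F β i) 0 := habs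
      _ ≤ Δ + 2 * ε := by rw [hdsum]; linarith
  linarith
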